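/- Let $u \in L^2((0,T)\times\mathbb{R}^2;\mathbb{R}^2)$ be divergence-free (in the distributional sense) and $P \in L^2((0,T);BMO_2(\mathbb{R}^2))$ with $P \in L^2_{loc}$. With cutoffs $\varphi_n(x) = \varphi(x/n)$ as above (supported in $B(0,n)$, gradient supported in the annulus $A_n = \{n/2<|x|<n\}$ with $|\nabla\varphi_n| \leq C/n$), one has $\left|\int_0^T\int_{\mathbb{R}^2} P\, u \cdot \nabla\varphi_n \,dx\,dt\right| \leq \frac{C}{n}\,\left\|P - \fint_{B(0,n)}P\right\|_{L^2((0,T)\times B(0,n))}\,\|u\|_{L^2((0,T)\times A_n)}$, and this quantity tends to $0$ as $n \to \infty$. -/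

import Mathlib

open MeasureTheory Metric Filter
open scoped ENNReal Topology NNReal RealInnerProductSpace

noncomputable section

set_option maxHeartbeats 1000000

local notation "E2" => EuclideanSpace ℝ (Fin 2)

lemma cutoff_facts (φ : E2 → ℝ)
    (hsm : ContDiff ℝ (⊤ : ℕ∞) φ) (hsupp : tsupport φ ⊆ ball 0 1)
    (hone : ∀ x ∈ ball (0:E2) (1/2), φ x = 1) :
    ∃ M > (0:ℝ), ∀ n : ℕ, 1 ≤ n →
      (ContDiff ℝ (⊤ : ℕ∞) (fun z : E2 => φ ((n:ℝ)⁻¹ • z)) ∧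
        HasCompactSupport (fun z : E2 => φ ((n:ℝ)⁻¹ • z))) ∧
      (∀ x : E2, ‖gradient (fun z : E2 => φ ((n:ℝ)⁻¹ • z)) x‖ ≤ M / n) ∧
      (∀ x : E2, ¬((n:ℝ)/2 ≤ ‖x‖ ∧ ‖x‖ < n) →
        gradient (fun z : E2 => φ ((n:ℝ)⁻¹ • z)) x = 0) := by
  have hφc : HasCompactSupport φ := by
    exact HasCompactSupport.intro (isCompact_closedBall (0:E2) 1)
      (fun x hx => image_eq_zero_of_notMem_tsupport
        (fun hm => hx (ball_subset_closedBall (hsupp hm))))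
  obtain ⟨M₀, hM₀⟩ := (hφc.fderiv ℝ).exists_bound_of_continuous (hsm.continuous_fderiv (by simp))
  refine ⟨max M₀ 1, lt_of_lt_of_le one_pos (le_max_right _ _), fun n hn => ?_⟩
  have hn0 : (0:ℝ) < n := by exact_mod_cast hn
  set c : ℝ := (n:ℝ)⁻¹ with hc
  have hc0 : 0 < c := inv_pos.2 hn0
  -- derivative of scaling map
  set L : E2 →L[ℝ] E2 := c • ContinuousLinearMap.id ℝ E2 with hL
  have hLapp : ∀ z : E2, L z = c • z := fun z => rfl
  have hψeq : (fun z : E2 => φ ((n:ℝ)⁻¹ • z)) = φ ∘ L := rfl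
  have hLd : ContDiff ℝ (⊤ : ℕ∞) (fun z : E2 => c • z) := contDiff_id.const_smul c
  have hψsm : ContDiff ℝ (⊤ : ℕ∞) (fun z : E2 => φ ((n:ℝ)⁻¹ • z)) := hsm.comp hLd
  have hψcs : HasCompactSupport (fun z : E2 => φ ((n:ℝ)⁻¹ • z)) := by
    apply HasCompactSupport.intro (isCompact_closedBall (0:E2) n)
    intro x hxn
    apply image_eq_zero_of_notMem_tsupport
    intro hmem
    have h1 := hsupp hmem
    rw [mem_ball_zero_iff, norm_smul, Real.norm_eq_abs, abs_of_pos hc0] at h1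
    have h2 : ‖x‖ < n := by
      have := (inv_mul_lt_iff₀ hn0).mp h1
      simpa using this
    exact hxn (mem_closedBall_zero_iff.mpr h2.le)
  have hfder : ∀ x : E2, fderiv ℝ (fun z : E2 => φ ((n:ℝ)⁻¹ • z)) x
      = (fderiv ℝ φ (c • x)).comp L := by
    intro x
    rw [hψeq]
    rw [fderiv_comp (x := x) (hsm.differentiable (by simp) _) (L.differentiableAt)]
    rw [L.fderiv]
    rfl
  have hgradnorm : ∀ x : E2, ‖gradient (fun z : E2 => φ ((n:ℝ)⁻¹ • z)) x‖
      = ‖fderiv ℝ (fun z : E2 => φ ((n:ℝ)⁻¹ • z)) x‖ := by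
    intro x; rw [gradient]; exact LinearIsometryEquiv.norm_map _ _
  have hLnorm : ‖L‖ ≤ c := by
    apply ContinuousLinearMap.opNorm_le_bound _ hc0.le
    intro z
    rw [hLapp, norm_smul, Real.norm_eq_abs, abs_of_pos hc0]
  refine ⟨⟨hψsm, hψcs⟩, ?_, ?_⟩
  · intro x
    rw [hgradnorm, hfder]
    calc ‖(fderiv ℝ φ (c • x)).comp L‖ ≤ ‖fderiv ℝ φ (c • x)‖ * ‖L‖ :=
          ContinuousLinearMap.opNorm_comp_le _ _
      _ ≤ M₀ * c :=
          mul_le_mul (hM₀ _) hLnorm (norm_nonneg _) ((norm_nonneg (fderiv ℝ φ (c • x))).trans (hM₀ (c • x)))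
      _ ≤ max M₀ 1 * c :=
          mul_le_mul_of_nonneg_right (le_max_left _ _) hc0.le
      _ = max M₀ 1 / n := by rw [hc, div_eq_mul_inv]
  · intro x hx
    push_neg at hx
    have hz : fderiv ℝ φ (c • x) = 0 := by
      rcases lt_or_ge ‖x‖ ((n:ℝ)/2) with h | h
      · -- φ is 1 near c • x
        have hmem : c • x ∈ ball (0:E2) (1/2) := by
          rw [mem_ball_zero_iff, norm_smul, Real.norm_eq_abs, abs_of_pos hc0]
          calc c * ‖x‖ < c * (n/2) := by
                apply mul_lt_mul_of_pos_left h hc0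
            _ = 1/2 := by rw [hc]; field_simp
        have hev : φ =ᶠ[𝓝 (c • x)] fun _ => 1 := by
          filter_upwards [isOpen_ball.mem_nhds hmem] with y hy using hone y hy
        rw [hev.fderiv_eq, fderiv_fun_const]; rfl
      · have hxn : (n:ℝ) ≤ ‖x‖ := hx h
        by_contra hne
        have hmem : c • x ∈ Function.support (fderiv ℝ φ) := hne
        have h1 := hsupp (support_fderiv_subset ℝ hmem)
        rw [mem_ball_zero_iff, norm_smul, Real.norm_eq_abs, abs_of_pos hc0] at h1
        have h2 : ‖x‖ < n := by
          have := (inv_mul_lt_iff₀ hn0).mp h1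
          simpa using this
        linarith
    rw [gradient, hfder, hz]
    simp

lemma integrable_mul_of_sq {α : Type*} {mα : MeasurableSpace α} {μ : Measure α} {f g : α → ℝ}
    (hf : AEStronglyMeasurable f μ) (hg : AEStronglyMeasurable g μ)
    (hf2 : Integrable (fun x => f x ^ 2) μ) (hg2 : Integrable (fun x => g x ^ 2) μ) :
    Integrable (fun x => f x * g x) μ := by
  refine Integrable.mono' (((hf2.add hg2).const_mul (1/2))) (hf.mul hg) ?_
  filter_upwards with x
  simp only [Pi.add_apply]
  rw [Real.norm_eq_abs, abs_mul]
  nlinarith [sq_nonneg (|f x| - |g x|), sq_abs (f x), sq_abs (g x), abs_nonneg (f x), abs_nonneg (g x)]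

lemma time_slice_bound
    (v : E2 → E2) (p : E2 → ℝ) (G : E2 → E2) (n : ℕ) (hn : 1 ≤ n) (M : ℝ) (hM0 : 0 < M)
    (hvm : AEStronglyMeasurable v volume) (hpm : AEStronglyMeasurable p volume)
    (hv2 : ∫⁻ x, (‖v x‖₊ : ℝ≥0∞) ^ (2:ℝ) < ⊤)
    (hGc : Continuous G)
    (hGb : ∀ x, ‖G x‖ ≤ M / n)
    (hGz : ∀ x, ¬((n:ℝ)/2 ≤ ‖x‖ ∧ ‖x‖ < n) → G x = 0)
    (hdiv0 : ∫ x, ⟪v x, G x⟫ = 0)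
    (hosc : IntegrableOn (fun x => (p x - ⨍ y in ball (0:E2) n, p y) ^ 2) (ball (0:E2) n) volume)
    (hint : Integrable (fun x => p x * ⟪v x, G x⟫) volume) :
    |∫ x, p x * ⟪v x, G x⟫| ≤ (M / n) *
      Real.sqrt (∫ x in ball (0:E2) n, (p x - ⨍ y in ball (0:E2) n, p y) ^ 2) *
      Real.sqrt (∫ x in {x : E2 | (n:ℝ)/2 < ‖x‖ ∧ ‖x‖ < (n:ℝ)}, ‖v x‖ ^ 2) := by
  have hn0 : (0:ℝ) < n := by exact_mod_cast hn
  set c₀ : ℝ := ⨍ y in ball (0:E2) n, p y with hc₀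
  set S : Set E2 := {x | (n:ℝ)/2 ≤ ‖x‖ ∧ ‖x‖ < n} with hSdef
  set A : Set E2 := {x : E2 | (n:ℝ)/2 < ‖x‖ ∧ ‖x‖ < (n:ℝ)} with hAdef
  have hS : MeasurableSet S := by
    have : S = {x : E2 | (n:ℝ)/2 ≤ ‖x‖} ∩ {x : E2 | ‖x‖ < n} := by
      ext x; simp [hSdef, Set.mem_setOf_eq]
    rw [this]
    exact ((isClosed_le continuous_const continuous_norm).measurableSet).inter
      ((isOpen_lt continuous_norm continuous_const).measurableSet)
  have hSball : S ⊆ ball (0:E2) n := fun x hx => mem_ball_zero_iff.2 hx.2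
  have hSvol : volume S < ⊤ := lt_of_le_of_lt (measure_mono hSball) measure_ball_lt_top
  -- v is square integrable on S
  have hnv2 : ∀ x : E2, (‖(‖v x‖^2 : ℝ)‖₊ : ℝ≥0∞) = (‖v x‖₊ : ℝ≥0∞) ^ (2:ℝ) := by
    intro x
    rw [show ((2:ℝ)) = ((2:ℕ):ℝ) by norm_num, ENNReal.rpow_natCast]
    simp [pow_two, nnnorm_mul, nnnorm_norm]
  have hv2S : IntegrableOn (fun x => ‖v x‖^2) S volume := by
    refine ⟨((hvm.norm.aemeasurable.pow_const 2).aestronglyMeasurable).restrict, ?_⟩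
    show (∫⁻ x in S, (‖(‖v x‖ ^ 2 : ℝ)‖₊ : ℝ≥0∞)) < ⊤
    calc ∫⁻ x in S, (‖(‖v x‖^2 : ℝ)‖₊ : ℝ≥0∞) = ∫⁻ x in S, (‖v x‖₊ : ℝ≥0∞) ^ (2:ℝ) := by
          simp_rw [hnv2]
      _ ≤ ∫⁻ x, (‖v x‖₊ : ℝ≥0∞) ^ (2:ℝ) := setLIntegral_le_lintegral _ _
      _ < ⊤ := hv2
  have hv1S : IntegrableOn (fun x => ‖v x‖) S volume := by
    refine Integrable.mono' (((integrableOn_const_iff (C := (1:ℝ))).2 (Or.inr hSvol)).add hv2S)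
      hvm.norm.restrict ?_
    filter_upwards with x
    simp only [Pi.add_apply]
    rw [Real.norm_eq_abs, abs_of_nonneg (norm_nonneg _)]
    nlinarith [sq_nonneg (‖v x‖ - 1)]
  -- the inner product integrand vanishes off S
  have hI0 : ∀ x ∉ S, ⟪v x, G x⟫ = 0 := by
    intro x hx
    rw [hGz x hx, inner_zero_right]
  have hIese : ∀ f : E2 → ℝ, (∀ x ∉ S, f x = 0) → f = S.indicator f := by
    intro f hf
    funext x
    by_cases hx : x ∈ S
    · rw [Set.indicator_of_mem hx]
    · rw [Set.indicator_of_notMem hx, hf x hx]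
  have hIm : AEStronglyMeasurable (fun x => ⟪v x, G x⟫) volume :=
    hvm.inner hGc.aestronglyMeasurable
  have hIint : Integrable (fun x => ⟪v x, G x⟫) volume := by
    rw [hIese _ hI0, integrable_indicator_iff hS]
    refine Integrable.mono' (hv1S.const_mul (M/n)) hIm.restrict ?_
    filter_upwards with x
    calc ‖⟪v x, G x⟫‖ ≤ ‖v x‖ * ‖G x‖ := norm_inner_le_norm _ _
      _ ≤ ‖v x‖ * (M/n) := by
          exact mul_le_mul_of_nonneg_left (hGb x) (norm_nonneg _)
      _ = (M/n) * ‖v x‖ := mul_comm _ _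
  -- subtract the mean
  have step1 : ∫ x, p x * ⟪v x, G x⟫ = ∫ x, (p x - c₀) * ⟪v x, G x⟫ := by
    have : ∀ x : E2, (p x - c₀) * ⟪v x, G x⟫ = p x * ⟪v x, G x⟫ - c₀ * ⟪v x, G x⟫ := by
      intro x; ring
    simp_rw [this]
    rw [integral_sub hint (hIint.const_mul c₀), integral_const_mul, hdiv0, mul_zero, sub_zero]
  -- square integrability of p - c₀ on S
  have hp2S : IntegrableOn (fun x => (p x - c₀)^2) S volume := hosc.mono_set hSball
  -- bound the integral on S
  have step2 : |∫ x, (p x - c₀) * ⟪v x, G x⟫| ≤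
      (M/n) * ∫ x in S, ‖p x - c₀‖ * ‖v x‖ := by
    have hz : ∀ x ∉ S, (p x - c₀) * ⟪v x, G x⟫ = 0 := by
      intro x hx; rw [hI0 x hx, mul_zero]
    rw [show |∫ x, (p x - c₀) * ⟪v x, G x⟫| = ‖∫ x, (p x - c₀) * ⟪v x, G x⟫‖ from
      (Real.norm_eq_abs _).symm]
    calc ‖∫ x, (p x - c₀) * ⟪v x, G x⟫‖ ≤ ∫ x, ‖(p x - c₀) * ⟪v x, G x⟫‖ :=
          norm_integral_le_integral_norm _
      _ = ∫ x in S, ‖(p x - c₀) * ⟪v x, G x⟫‖ := by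
          rw [← integral_indicator hS]
          congr 1
          funext x
          by_cases hx : x ∈ S
          · rw [Set.indicator_of_mem hx]
          · rw [Set.indicator_of_notMem hx, hz x hx, norm_zero]
      _ ≤ ∫ x in S, (M/n) * (‖p x - c₀‖ * ‖v x‖) := by
          apply integral_mono_of_nonneg
          · filter_upwards with x using norm_nonneg _
          · exact (integrable_mul_of_sq ((hpm.sub aestronglyMeasurable_const).norm.restrict)
              hvm.norm.restrict
              (by simp only [Pi.sub_apply, Real.norm_eq_abs, sq_abs]; exact hp2S) hv2S).const_mul (M/n)
          · filter_upwards with x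
            rw [norm_mul]
            calc ‖p x - c₀‖ * ‖⟪v x, G x⟫‖ ≤ ‖p x - c₀‖ * (‖v x‖ * (M/n)) := by
                  apply mul_le_mul_of_nonneg_left ?_ (norm_nonneg _)
                  calc ‖⟪v x, G x⟫‖ ≤ ‖v x‖ * ‖G x‖ := norm_inner_le_norm _ _
                    _ ≤ ‖v x‖ * (M/n) := mul_le_mul_of_nonneg_left (hGb x) (norm_nonneg _)
              _ = (M/n) * (‖p x - c₀‖ * ‖v x‖) := by ring
      _ = (M/n) * ∫ x in S, ‖p x - c₀‖ * ‖v x‖ := integral_const_mul _ _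
  -- Hölder on S
  have hconj : Real.HolderConjugate 2 2 := Real.HolderConjugate.two_two
  have hpsub : AEStronglyMeasurable (fun x => p x - c₀) volume := by
    exact hpm.sub aestronglyMeasurable_const
  have hpmem : MemLp (fun x => ‖p x - c₀‖) 2 (volume.restrict S) := by
    refine (memLp_two_iff_integrable_sq (hpsub.norm.restrict)).2 ?_
    simp only [Real.norm_eq_abs, sq_abs]; exact hp2S
  have hvmem : MemLp (fun x => ‖v x‖) 2 (volume.restrict S) := by
    refine (memLp_two_iff_integrable_sq (hvm.norm.restrict)).2 ?_
    exact hv2S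
  have step3 : ∫ x in S, ‖p x - c₀‖ * ‖v x‖ ≤
      Real.sqrt (∫ x in S, (p x - c₀)^2) * Real.sqrt (∫ x in S, ‖v x‖^2) := by
    have := integral_mul_le_Lp_mul_Lq_of_nonneg hconj
      (μ := volume.restrict S) (f := fun x => ‖p x - c₀‖) (g := fun x => ‖v x‖)
      (Eventually.of_forall fun x => norm_nonneg _)
      (Eventually.of_forall fun x => norm_nonneg _)
      (by simpa using hpmem) (by simpa using hvmem)
    calc ∫ x in S, ‖p x - c₀‖ * ‖v x‖
        ≤ (∫ x in S, ‖p x - c₀‖ ^ (2:ℝ)) ^ ((1:ℝ)/2) * (∫ x in S, ‖v x‖ ^ (2:ℝ)) ^ ((1:ℝ)/2) :=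
          this
      _ = Real.sqrt (∫ x in S, (p x - c₀)^2) * Real.sqrt (∫ x in S, ‖v x‖^2) := by
          rw [Real.sqrt_eq_rpow, Real.sqrt_eq_rpow]
          congr 2
          · apply integral_congr_ae
            filter_upwards with x
            rw [show ((2:ℝ)) = ((2:ℕ):ℝ) by norm_num, Real.rpow_natCast]
            rw [Real.norm_eq_abs, sq_abs]
          · apply integral_congr_ae
            filter_upwards with x
            rw [show ((2:ℝ)) = ((2:ℕ):ℝ) by norm_num, Real.rpow_natCast]
  -- enlarge domains
  have step4 : Real.sqrt (∫ x in S, (p x - c₀)^2) ≤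
      Real.sqrt (∫ x in ball (0:E2) n, (p x - c₀)^2) := by
    apply Real.sqrt_le_sqrt
    apply setIntegral_mono_set hosc
    · filter_upwards with x using sq_nonneg _
    · exact HasSubset.Subset.eventuallyLE hSball
  have step5 : ∫ x in S, ‖v x‖^2 = ∫ x in A, ‖v x‖^2 := by
    apply setIntegral_congr_set
    rw [MeasureTheory.ae_eq_set]
    constructor
    · refine measure_mono_null ?_ (Measure.addHaar_sphere volume (0:E2) ((n:ℝ)/2))
      intro x hx
      rcases hx with ⟨⟨h1, h2⟩, h3⟩
      have h4 : ¬((n:ℝ)/2 < ‖x‖) := fun hlt => h3 ⟨hlt, h2⟩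
      rw [mem_sphere_zero_iff_norm]
      exact le_antisymm (le_of_not_gt h4) h1
    · refine measure_mono_null ?_ (measure_empty (μ := (volume : Measure E2)))
      intro x hx
      rcases hx with ⟨⟨h1, h2⟩, h3⟩
      exact absurd ⟨h1.le, h2⟩ h3
  -- combine
  rw [step1]
  calc |∫ x, (p x - c₀) * ⟪v x, G x⟫| ≤ (M/n) * ∫ x in S, ‖p x - c₀‖ * ‖v x‖ := step2
    _ ≤ (M/n) * (Real.sqrt (∫ x in S, (p x - c₀)^2) * Real.sqrt (∫ x in S, ‖v x‖^2)) := by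
        apply mul_le_mul_of_nonneg_left step3 (by positivity)
    _ ≤ (M/n) * (Real.sqrt (∫ x in ball (0:E2) n, (p x - c₀)^2) *
          Real.sqrt (∫ x in A, ‖v x‖^2)) := by
        rw [step5]
        apply mul_le_mul_of_nonneg_left
          (mul_le_mul_of_nonneg_right step4 (Real.sqrt_nonneg _)) (by positivity)
    _ = (M/n) * Real.sqrt (∫ x in ball (0:E2) n, (p x - c₀)^2) *
          Real.sqrt (∫ x in A, ‖v x‖^2) := by ring

lemma holder_sqrt {α : Type*} {mα : MeasurableSpace α} {μ : Measure α} {f g : α → ℝ}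
    (hf0 : ∀ x, 0 ≤ f x) (hg0 : ∀ x, 0 ≤ g x)
    (hf : MemLp f 2 μ) (hg : MemLp g 2 μ) :
    ∫ x, f x * g x ∂μ ≤ Real.sqrt (∫ x, f x ^ 2 ∂μ) * Real.sqrt (∫ x, g x ^ 2 ∂μ) := by
  have hconj : Real.HolderConjugate 2 2 := Real.HolderConjugate.two_two
  have h := integral_mul_le_Lp_mul_Lq_of_nonneg hconj (Eventually.of_forall hf0)
    (Eventually.of_forall hg0) (by simpa using hf) (by simpa using hg)
  calc ∫ x, f x * g x ∂μ
      ≤ (∫ x, f x ^ (2:ℝ) ∂μ) ^ ((1:ℝ)/2) * (∫ x, g x ^ (2:ℝ) ∂μ) ^ ((1:ℝ)/2) := h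
    _ = Real.sqrt (∫ x, f x ^ 2 ∂μ) * Real.sqrt (∫ x, g x ^ 2 ∂μ) := by
        rw [Real.sqrt_eq_rpow, Real.sqrt_eq_rpow]
        congr 2 <;>
        · apply integral_congr_ae
          filter_upwards with x
          rw [show ((2:ℝ)) = ((2:ℕ):ℝ) by norm_num, Real.rpow_natCast]

/-- Vanishing of the pressure flux term: for a divergence-free `u ∈ L²((0,T)×ℝ²)` and a
pressure `P ∈ L²((0,T);BMO₂) ∩ L²_loc`, with the cutoffs `φₙ(x) = φ(x/n)`, one has
`|∫_0^T ∫ P u·∇φₙ| ≤ (C/n) ‖P - ⨍_{B(0,n)}P‖_{L²((0,T)×B(0,n))} ‖u‖_{L²((0,T)×Aₙ)}`,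
and this quantity tends to `0` as `n → ∞`. -/
theorem pressure_flux_vanishes
    (T : ℝ) (hT : 0 < T)
    (u : ℝ → EuclideanSpace ℝ (Fin 2) → EuclideanSpace ℝ (Fin 2))
    (P : ℝ → EuclideanSpace ℝ (Fin 2) → ℝ)
    (b : ℝ → ℝ)
    (φ : EuclideanSpace ℝ (Fin 2) → ℝ)
    -- measurability
    (humeas : AEStronglyMeasurable (fun q : ℝ × EuclideanSpace ℝ (Fin 2) => u q.1 q.2)
      ((volume.restrict (Set.Ioo 0 T)).prod volume))
    (hPmeas : AEStronglyMeasurable (fun q : ℝ × EuclideanSpace ℝ (Fin 2) => P q.1 q.2)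
      ((volume.restrict (Set.Ioo 0 T)).prod volume))
    -- u ∈ L²((0,T)×ℝ²)
    (huL2 : ∫⁻ t in Set.Ioo 0 T, ∫⁻ x, (‖u t x‖₊ : ℝ≥0∞) ^ (2:ℝ) < ⊤)
    -- u(t) is divergence-free in the distributional sense
    (hdiv : ∀ t ∈ Set.Ioo 0 T, ∀ ψ : EuclideanSpace ℝ (Fin 2) → ℝ,
      ContDiff ℝ (⊤ : ℕ∞) ψ → HasCompactSupport ψ → ∫ x, ⟪u t x, gradient ψ x⟫ = 0)
    -- P(t) has BMO₂ seminorm at most b(t), with b ∈ L²(0,T)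
    (hPosc : ∀ t ∈ Set.Ioo 0 T, ∀ (c : EuclideanSpace ℝ (Fin 2)) (R : ℝ), 0 < R →
      IntegrableOn (fun x => (P t x - ⨍ y in ball c R, P t y) ^ 2) (ball c R) volume)
    (hPb : ∀ t ∈ Set.Ioo 0 T, ∀ (c : EuclideanSpace ℝ (Fin 2)) (R : ℝ), 0 < R →
      ⨍ x in ball c R, (P t x - ⨍ y in ball c R, P t y) ^ 2 ≤ b t ^ 2)
    (hbL2 : IntegrableOn (fun t => b t ^ 2) (Set.Ioo 0 T) volume)
    -- P ∈ L²_loc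
    (hPloc : ∀ t ∈ Set.Ioo 0 T, ∀ r : ℝ, 0 < r →
      IntegrableOn (fun x => P t x ^ 2) (ball (0 : EuclideanSpace ℝ (Fin 2)) r) volume)
    -- the cutoff function
    (hsm : ContDiff ℝ (⊤ : ℕ∞) φ) (h01 : ∀ x, 0 ≤ φ x ∧ φ x ≤ 1)
    (hsupp : tsupport φ ⊆ ball 0 1)
    (hone : ∀ x ∈ ball (0 : EuclideanSpace ℝ (Fin 2)) (1/2), φ x = 1)
    -- integrability of the flux integrand
    (hInt : ∀ n : ℕ, 1 ≤ n → ∀ t ∈ Set.Ioo 0 T,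
      Integrable (fun x => P t x * ⟪u t x, gradient (fun z => φ ((n:ℝ)⁻¹ • z)) x⟫) volume)
    (hInt' : ∀ n : ℕ, 1 ≤ n → IntegrableOn
      (fun t => ∫ x, P t x * ⟪u t x, gradient (fun z => φ ((n:ℝ)⁻¹ • z)) x⟫)
      (Set.Ioo 0 T) volume) :
    (∃ C > (0:ℝ), ∀ n : ℕ, 1 ≤ n →
      |∫ t in Set.Ioo 0 T, ∫ x, P t x * ⟪u t x, gradient (fun z => φ ((n:ℝ)⁻¹ • z)) x⟫| ≤
        (C / n) *
          Real.sqrt (∫ t in Set.Ioo 0 T, ∫ x in ball (0 : EuclideanSpace ℝ (Fin 2)) n,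
            (P t x - ⨍ y in ball (0 : EuclideanSpace ℝ (Fin 2)) n, P t y) ^ 2) *
          Real.sqrt (∫ t in Set.Ioo 0 T,
            ∫ x in {x : EuclideanSpace ℝ (Fin 2) | (n:ℝ)/2 < ‖x‖ ∧ ‖x‖ < (n:ℝ)},
              ‖u t x‖ ^ 2)) ∧
    Tendsto (fun n : ℕ =>
        ∫ t in Set.Ioo 0 T, ∫ x, P t x * ⟪u t x, gradient (fun z => φ ((n:ℝ)⁻¹ • z)) x⟫)
      atTop (nhds 0) := by
  obtain ⟨M, hM0, hMn⟩ := cutoff_facts φ hsm hsupp hone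
  have hsq2 : ∀ y : ℝ≥0∞, y ^ (2:ℝ) = y * y := fun y => by
    rw [show ((2:ℝ)) = ((2:ℕ):ℝ) by norm_num, ENNReal.rpow_natCast, pow_two]
  set μ : Measure ℝ := volume.restrict (Set.Ioo (0:ℝ) T) with hμdef
  have huL2' : (∫⁻ t, (∫⁻ x, (‖u t x‖₊ : ℝ≥0∞) * ‖u t x‖₊) ∂μ) < ⊤ := by
    simpa only [hsq2] using huL2
  obtain ⟨u', hu'm, hu'e⟩ := humeas
  have hae_u : ∀ᵐ t ∂μ, AEStronglyMeasurable (u t) volume := by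
    filter_upwards [Measure.ae_ae_of_ae_prod hu'e] with t ht
    exact ⟨fun x => u' (t, x), hu'm.comp_measurable measurable_prodMk_left, ht⟩
  have hae_P : ∀ᵐ t ∂μ, AEStronglyMeasurable (P t) volume := hPmeas.prodMk_left
  have hwmeas : AEMeasurable (fun t => ∫⁻ x, (‖u t x‖₊ : ℝ≥0∞) * ‖u t x‖₊) μ := by
    refine ⟨fun t => ∫⁻ x, (‖u' (t, x)‖₊ : ℝ≥0∞) * ‖u' (t, x)‖₊, ?_, ?_⟩
    · exact Measurable.lintegral_prod_right'
        ((hu'm.measurable.nnnorm.coe_nnreal_ennreal).mul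
          hu'm.measurable.nnnorm.coe_nnreal_ennreal)
    · filter_upwards [Measure.ae_ae_of_ae_prod hu'e] with t ht
      refine lintegral_congr_ae ?_
      filter_upwards [ht] with x hx
      rw [hx]
  have hufin : ∀ᵐ t ∂μ, (∫⁻ x, (‖u t x‖₊ : ℝ≥0∞) * ‖u t x‖₊) < ⊤ :=
    ae_lt_top' hwmeas huL2'.ne
  have hwint : Integrable (fun t => (∫⁻ x, (‖u t x‖₊ : ℝ≥0∞) * ‖u t x‖₊).toReal) μ := by
    refine ⟨hwmeas.ennreal_toReal.aestronglyMeasurable, ?_⟩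
    show (∫⁻ t, (‖(∫⁻ x, (‖u t x‖₊ : ℝ≥0∞) * ‖u t x‖₊).toReal‖₊ : ℝ≥0∞) ∂μ) < ⊤
    calc ∫⁻ t, (‖(∫⁻ x, (‖u t x‖₊ : ℝ≥0∞) * ‖u t x‖₊).toReal‖₊ : ℝ≥0∞) ∂μ
        ≤ ∫⁻ t, (∫⁻ x, (‖u t x‖₊ : ℝ≥0∞) * ‖u t x‖₊) ∂μ := by
          apply lintegral_mono
          intro t
          exact le_trans (le_of_eq (Real.enorm_eq_ofReal ENNReal.toReal_nonneg))
            ENNReal.ofReal_toReal_le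
      _ < ⊤ := huL2'
  have humeas' : AEStronglyMeasurable (fun q : ℝ × E2 => u q.1 q.2) (μ.prod volume) :=
    ⟨u', hu'm, hu'e⟩
  have hA_meas : ∀ n : ℕ, MeasurableSet {x : E2 | (n:ℝ)/2 < ‖x‖ ∧ ‖x‖ < (n:ℝ)} := by
    intro n
    have hset : {x : E2 | (n:ℝ)/2 < ‖x‖ ∧ ‖x‖ < (n:ℝ)}
        = {x : E2 | (n:ℝ)/2 < ‖x‖} ∩ {x : E2 | ‖x‖ < (n:ℝ)} := by
      ext x; simp [Set.mem_setOf_eq]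
    rw [hset]
    exact (isOpen_lt continuous_const continuous_norm).measurableSet.inter
      (isOpen_lt continuous_norm continuous_const).measurableSet
  set K : ℝ := (volume (ball (0:E2) 1)).toReal * ∫ t, b t ^ 2 ∂μ with hKdef
  have hK0 : 0 ≤ K :=
    mul_nonneg ENNReal.toReal_nonneg (integral_nonneg fun t => sq_nonneg _)
  have key : ∀ n : ℕ, 1 ≤ n →
      (|∫ t, (∫ x, P t x * ⟪u t x, gradient (fun z => φ ((n:ℝ)⁻¹ • z)) x⟫) ∂μ| ≤
        (M / n) *
          Real.sqrt (∫ t, (∫ x in ball (0:E2) (n:ℝ),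
            (P t x - ⨍ y in ball (0:E2) (n:ℝ), P t y) ^ 2) ∂μ) *
          Real.sqrt (∫ t, (∫ x in {x : E2 | (n:ℝ)/2 < ‖x‖ ∧ ‖x‖ < (n:ℝ)}, ‖u t x‖ ^ 2) ∂μ)) ∧
      Real.sqrt (∫ t, (∫ x in ball (0:E2) (n:ℝ),
            (P t x - ⨍ y in ball (0:E2) (n:ℝ), P t y) ^ 2) ∂μ) ≤ (n:ℝ) * Real.sqrt K := by
    intro n hn
    have hn0R : (0:ℝ) < n := by exact_mod_cast hn
    obtain ⟨⟨hψsm, hψcs⟩, hGb, hGz⟩ := hMn n hn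
    have hGc : Continuous (gradient (fun z : E2 => φ ((n:ℝ)⁻¹ • z))) := by
      have h1 : gradient (fun z : E2 => φ ((n:ℝ)⁻¹ • z))
          = fun x => (InnerProductSpace.toDual ℝ E2).symm
              (fderiv ℝ (fun z : E2 => φ ((n:ℝ)⁻¹ • z)) x) := rfl
      rw [h1]
      exact (LinearIsometryEquiv.continuous _).comp (hψsm.continuous_fderiv (by simp))
    have hbound_t : ∀ᵐ t ∂μ,
        |∫ x, P t x * ⟪u t x, gradient (fun z : E2 => φ ((n:ℝ)⁻¹ • z)) x⟫| ≤
          (M / n) * Real.sqrt (∫ x in ball (0:E2) (n:ℝ),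
              (P t x - ⨍ y in ball (0:E2) (n:ℝ), P t y) ^ 2) *
            Real.sqrt (∫ x in {x : E2 | (n:ℝ)/2 < ‖x‖ ∧ ‖x‖ < (n:ℝ)}, ‖u t x‖ ^ 2) := by
      filter_upwards [ae_restrict_mem measurableSet_Ioo, hae_u, hae_P, hufin]
        with t ht hum hpm hfin
      refine time_slice_bound (u t) (P t) _ n hn M hM0 hum hpm ?_ hGc hGb hGz
        (hdiv t ht _ hψsm hψcs) (hPosc t ht 0 n hn0R) (hInt n hn t ht)
      simp only [hsq2]; exact hfin
    -- measurability in time of the two square functions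
    have hprodball : μ.prod (volume.restrict (ball (0:E2) (n:ℝ)))
        = (μ.prod volume).restrict (Set.univ ×ˢ ball (0:E2) (n:ℝ)) := by
      rw [← Measure.prod_restrict, Measure.restrict_univ]
    have hPball : AEStronglyMeasurable (fun q : ℝ × E2 => P q.1 q.2)
        (μ.prod (volume.restrict (ball (0:E2) (n:ℝ)))) := by
      rw [hprodball]; exact hPmeas.restrict
    have havg : AEStronglyMeasurable (fun t => ⨍ y in ball (0:E2) (n:ℝ), P t y) μ := by
      have h1 := hPball.integral_prod_right'
      have h2 : (fun t => ⨍ y in ball (0:E2) (n:ℝ), P t y)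
          = fun t => (volume (ball (0:E2) (n:ℝ))).toReal⁻¹ •
            ∫ y in ball (0:E2) (n:ℝ), P t y := by
        funext t; rw [setAverage_eq]; rfl
      rw [h2]
      exact h1.const_smul ((volume (ball (0:E2) (n:ℝ))).toReal⁻¹)
    have hfst : AEStronglyMeasurable (fun q : ℝ × E2 => ⨍ y in ball (0:E2) (n:ℝ), P q.1 y)
        (μ.prod (volume.restrict (ball (0:E2) (n:ℝ)))) :=
      havg.comp_quasiMeasurePreserving Measure.quasiMeasurePreserving_fst
    have hPsq : AEStronglyMeasurable
        (fun q : ℝ × E2 => (P q.1 q.2 - ⨍ y in ball (0:E2) (n:ℝ), P q.1 y) ^ 2)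
        (μ.prod (volume.restrict (ball (0:E2) (n:ℝ)))) :=
      ((hPball.sub hfst).aemeasurable.pow_const 2).aestronglyMeasurable
    have hgsqm : AEStronglyMeasurable
        (fun t => ∫ x in ball (0:E2) (n:ℝ),
          (P t x - ⨍ y in ball (0:E2) (n:ℝ), P t y) ^ 2) μ :=
      hPsq.integral_prod_right'
    have hgm : AEStronglyMeasurable
        (fun t => Real.sqrt (∫ x in ball (0:E2) (n:ℝ),
          (P t x - ⨍ y in ball (0:E2) (n:ℝ), P t y) ^ 2)) μ :=
      Real.continuous_sqrt.comp_aestronglyMeasurable hgsqm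
    have hprodA : μ.prod (volume.restrict {x : E2 | (n:ℝ)/2 < ‖x‖ ∧ ‖x‖ < (n:ℝ)})
        = (μ.prod volume).restrict
            (Set.univ ×ˢ {x : E2 | (n:ℝ)/2 < ‖x‖ ∧ ‖x‖ < (n:ℝ)}) := by
      rw [← Measure.prod_restrict, Measure.restrict_univ]
    have huA : AEStronglyMeasurable (fun q : ℝ × E2 => ‖u q.1 q.2‖ ^ 2)
        (μ.prod (volume.restrict {x : E2 | (n:ℝ)/2 < ‖x‖ ∧ ‖x‖ < (n:ℝ)})) := by
      rw [hprodA]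
      exact ((humeas'.norm.aemeasurable.pow_const 2).aestronglyMeasurable).restrict
    have hhsqm : AEStronglyMeasurable
        (fun t => ∫ x in {x : E2 | (n:ℝ)/2 < ‖x‖ ∧ ‖x‖ < (n:ℝ)}, ‖u t x‖ ^ 2) μ :=
      huA.integral_prod_right'
    have hhm : AEStronglyMeasurable
        (fun t => Real.sqrt (∫ x in {x : E2 | (n:ℝ)/2 < ‖x‖ ∧ ‖x‖ < (n:ℝ)},
          ‖u t x‖ ^ 2)) μ :=
      Real.continuous_sqrt.comp_aestronglyMeasurable hhsqm
    -- integrability of the squares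
    have hVfin : volume (ball (0:E2) (n:ℝ)) ≠ ⊤ := measure_ball_lt_top.ne
    have hV0 : 0 < (volume (ball (0:E2) (n:ℝ))).toReal :=
      ENNReal.toReal_pos (measure_ball_pos volume _ hn0R).ne' hVfin
    have hgsq_nonneg : ∀ t, 0 ≤ ∫ x in ball (0:E2) (n:ℝ),
        (P t x - ⨍ y in ball (0:E2) (n:ℝ), P t y) ^ 2 :=
      fun t => integral_nonneg fun x => sq_nonneg _
    have hhsq_nonneg : ∀ t, 0 ≤ ∫ x in {x : E2 | (n:ℝ)/2 < ‖x‖ ∧ ‖x‖ < (n:ℝ)},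
        ‖u t x‖ ^ 2 := fun t => integral_nonneg fun x => sq_nonneg _
    have hgsq_le : ∀ᵐ t ∂μ, (∫ x in ball (0:E2) (n:ℝ),
        (P t x - ⨍ y in ball (0:E2) (n:ℝ), P t y) ^ 2)
        ≤ (volume (ball (0:E2) (n:ℝ))).toReal * b t ^ 2 := by
      filter_upwards [ae_restrict_mem measurableSet_Ioo] with t ht
      have h1 := hPb t ht 0 n hn0R
      have h2 : ∫ x in ball (0:E2) (n:ℝ), (P t x - ⨍ y in ball (0:E2) (n:ℝ), P t y) ^ 2
          = (volume (ball (0:E2) (n:ℝ))).toReal *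
            ⨍ x in ball (0:E2) (n:ℝ), (P t x - ⨍ y in ball (0:E2) (n:ℝ), P t y) ^ 2 := by
        have havg2 := setAverage_eq (μ := volume)
          (fun x => (P t x - ⨍ y in ball (0:E2) (n:ℝ), P t y) ^ 2) (ball (0:E2) (n:ℝ))
        rw [havg2, smul_eq_mul, ← mul_assoc, measureReal_def, mul_inv_cancel₀ hV0.ne', one_mul]
      rw [h2]
      exact mul_le_mul_of_nonneg_left h1 ENNReal.toReal_nonneg
    have hg2int : Integrable (fun t => Real.sqrt (∫ x in ball (0:E2) (n:ℝ),
        (P t x - ⨍ y in ball (0:E2) (n:ℝ), P t y) ^ 2) ^ 2) μ := by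
      refine Integrable.mono' (hbL2.const_mul ((volume (ball (0:E2) (n:ℝ))).toReal))
        ((hgm.aemeasurable.pow_const 2).aestronglyMeasurable) ?_
      filter_upwards [hgsq_le] with t ht
      rw [Real.norm_eq_abs, abs_of_nonneg (sq_nonneg _), Real.sq_sqrt (hgsq_nonneg t)]
      exact ht
    have hhsq_le : ∀ᵐ t ∂μ, (∫ x in {x : E2 | (n:ℝ)/2 < ‖x‖ ∧ ‖x‖ < (n:ℝ)}, ‖u t x‖ ^ 2)
        ≤ (∫⁻ x, (‖u t x‖₊ : ℝ≥0∞) * ‖u t x‖₊).toReal := by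
      filter_upwards [hae_u, hufin] with t hum hfin
      have heq : ∫ x in {x : E2 | (n:ℝ)/2 < ‖x‖ ∧ ‖x‖ < (n:ℝ)}, ‖u t x‖ ^ 2
          = (∫⁻ x in {x : E2 | (n:ℝ)/2 < ‖x‖ ∧ ‖x‖ < (n:ℝ)},
              ENNReal.ofReal (‖u t x‖ ^ 2)).toReal := by
        rw [integral_eq_lintegral_of_nonneg_ae (Eventually.of_forall fun x => sq_nonneg _)
          ((hum.norm.aemeasurable.pow_const 2).aestronglyMeasurable.restrict)]
      rw [heq]
      apply ENNReal.toReal_mono hfin.ne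
      calc ∫⁻ x in {x : E2 | (n:ℝ)/2 < ‖x‖ ∧ ‖x‖ < (n:ℝ)}, ENNReal.ofReal (‖u t x‖ ^ 2)
          = ∫⁻ x in {x : E2 | (n:ℝ)/2 < ‖x‖ ∧ ‖x‖ < (n:ℝ)},
              (‖u t x‖₊ : ℝ≥0∞) * ‖u t x‖₊ := by
            apply lintegral_congr
            intro x
            rw [show ‖u t x‖ ^ 2 = ‖u t x‖ * ‖u t x‖ from pow_two _,
              ENNReal.ofReal_mul (norm_nonneg _), ofReal_norm, enorm_eq_nnnorm]
        _ ≤ ∫⁻ x, (‖u t x‖₊ : ℝ≥0∞) * ‖u t x‖₊ := setLIntegral_le_lintegral _ _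
    have hh2int : Integrable (fun t => Real.sqrt
        (∫ x in {x : E2 | (n:ℝ)/2 < ‖x‖ ∧ ‖x‖ < (n:ℝ)}, ‖u t x‖ ^ 2) ^ 2) μ := by
      refine Integrable.mono' hwint ((hhm.aemeasurable.pow_const 2).aestronglyMeasurable) ?_
      filter_upwards [hhsq_le] with t ht
      rw [Real.norm_eq_abs, abs_of_nonneg (sq_nonneg _), Real.sq_sqrt (hhsq_nonneg t)]
      exact ht
    have hgMem : MemLp (fun t => Real.sqrt (∫ x in ball (0:E2) (n:ℝ),
        (P t x - ⨍ y in ball (0:E2) (n:ℝ), P t y) ^ 2)) 2 μ :=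
      (memLp_two_iff_integrable_sq hgm).2 hg2int
    have hhMem : MemLp (fun t => Real.sqrt
        (∫ x in {x : E2 | (n:ℝ)/2 < ‖x‖ ∧ ‖x‖ < (n:ℝ)}, ‖u t x‖ ^ 2)) 2 μ :=
      (memLp_two_iff_integrable_sq hhm).2 hh2int
    have hGH := holder_sqrt (fun t => Real.sqrt_nonneg _) (fun t => Real.sqrt_nonneg _)
      hgMem hhMem
    have hIn_eq : (∫ t, Real.sqrt (∫ x in ball (0:E2) (n:ℝ),
          (P t x - ⨍ y in ball (0:E2) (n:ℝ), P t y) ^ 2) ^ 2 ∂μ)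
        = ∫ t, (∫ x in ball (0:E2) (n:ℝ),
          (P t x - ⨍ y in ball (0:E2) (n:ℝ), P t y) ^ 2) ∂μ :=
      integral_congr_ae (Eventually.of_forall fun t => Real.sq_sqrt (hgsq_nonneg t))
    have hJn_eq : (∫ t, Real.sqrt (∫ x in {x : E2 | (n:ℝ)/2 < ‖x‖ ∧ ‖x‖ < (n:ℝ)},
          ‖u t x‖ ^ 2) ^ 2 ∂μ)
        = ∫ t, (∫ x in {x : E2 | (n:ℝ)/2 < ‖x‖ ∧ ‖x‖ < (n:ℝ)}, ‖u t x‖ ^ 2) ∂μ :=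
      integral_congr_ae (Eventually.of_forall fun t => Real.sq_sqrt (hhsq_nonneg t))
    constructor
    · rw [show |∫ t, (∫ x, P t x * ⟪u t x, gradient (fun z => φ ((n:ℝ)⁻¹ • z)) x⟫) ∂μ|
        = ‖∫ t, (∫ x, P t x * ⟪u t x, gradient (fun z => φ ((n:ℝ)⁻¹ • z)) x⟫) ∂μ‖ from
        (Real.norm_eq_abs _).symm]
      calc ‖∫ t, (∫ x, P t x * ⟪u t x, gradient (fun z => φ ((n:ℝ)⁻¹ • z)) x⟫) ∂μ‖
          ≤ ∫ t, ‖∫ x, P t x * ⟪u t x, gradient (fun z => φ ((n:ℝ)⁻¹ • z)) x⟫‖ ∂μ :=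
            norm_integral_le_integral_norm _
        _ ≤ ∫ t, (M/n) * (Real.sqrt (∫ x in ball (0:E2) (n:ℝ),
              (P t x - ⨍ y in ball (0:E2) (n:ℝ), P t y) ^ 2) *
              Real.sqrt (∫ x in {x : E2 | (n:ℝ)/2 < ‖x‖ ∧ ‖x‖ < (n:ℝ)},
                ‖u t x‖ ^ 2)) ∂μ := by
            apply integral_mono_of_nonneg (Eventually.of_forall fun t => norm_nonneg _)
              ((integrable_mul_of_sq hgm hhm hg2int hh2int).const_mul (M/n))
            filter_upwards [hbound_t] with t ht
            rw [Real.norm_eq_abs]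
            calc |∫ x, P t x * ⟪u t x, gradient (fun z => φ ((n:ℝ)⁻¹ • z)) x⟫|
                ≤ (M/n) * Real.sqrt (∫ x in ball (0:E2) (n:ℝ),
                    (P t x - ⨍ y in ball (0:E2) (n:ℝ), P t y) ^ 2) *
                  Real.sqrt (∫ x in {x : E2 | (n:ℝ)/2 < ‖x‖ ∧ ‖x‖ < (n:ℝ)},
                    ‖u t x‖ ^ 2) := ht
              _ = (M/n) * (Real.sqrt (∫ x in ball (0:E2) (n:ℝ),
                    (P t x - ⨍ y in ball (0:E2) (n:ℝ), P t y) ^ 2) *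
                  Real.sqrt (∫ x in {x : E2 | (n:ℝ)/2 < ‖x‖ ∧ ‖x‖ < (n:ℝ)},
                    ‖u t x‖ ^ 2)) := by ring
        _ = (M/n) * ∫ t, (Real.sqrt (∫ x in ball (0:E2) (n:ℝ),
              (P t x - ⨍ y in ball (0:E2) (n:ℝ), P t y) ^ 2) *
              Real.sqrt (∫ x in {x : E2 | (n:ℝ)/2 < ‖x‖ ∧ ‖x‖ < (n:ℝ)},
                ‖u t x‖ ^ 2)) ∂μ := integral_const_mul _ _
        _ ≤ (M/n) * (Real.sqrt (∫ t, Real.sqrt (∫ x in ball (0:E2) (n:ℝ),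
              (P t x - ⨍ y in ball (0:E2) (n:ℝ), P t y) ^ 2) ^ 2 ∂μ) *
              Real.sqrt (∫ t, Real.sqrt (∫ x in {x : E2 | (n:ℝ)/2 < ‖x‖ ∧ ‖x‖ < (n:ℝ)},
                ‖u t x‖ ^ 2) ^ 2 ∂μ)) := by
            apply mul_le_mul_of_nonneg_left hGH (by positivity)
        _ = (M/n) * Real.sqrt (∫ t, (∫ x in ball (0:E2) (n:ℝ),
              (P t x - ⨍ y in ball (0:E2) (n:ℝ), P t y) ^ 2) ∂μ) *
              Real.sqrt (∫ t, (∫ x in {x : E2 | (n:ℝ)/2 < ‖x‖ ∧ ‖x‖ < (n:ℝ)},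
                ‖u t x‖ ^ 2) ∂μ) := by
            rw [hIn_eq, hJn_eq]; ring
    · have hIn_le : (∫ t, (∫ x in ball (0:E2) (n:ℝ),
          (P t x - ⨍ y in ball (0:E2) (n:ℝ), P t y) ^ 2) ∂μ) ≤ (n:ℝ)^2 * K := by
        calc (∫ t, (∫ x in ball (0:E2) (n:ℝ),
              (P t x - ⨍ y in ball (0:E2) (n:ℝ), P t y) ^ 2) ∂μ)
            ≤ ∫ t, (volume (ball (0:E2) (n:ℝ))).toReal * b t ^ 2 ∂μ :=
              integral_mono_of_nonneg (Eventually.of_forall hgsq_nonneg)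
                (hbL2.const_mul _) hgsq_le
          _ = (volume (ball (0:E2) (n:ℝ))).toReal * ∫ t, b t ^ 2 ∂μ := integral_const_mul _ _
          _ = (n:ℝ)^2 * K := by
              rw [hKdef, ← mul_assoc]
              congr 1
              rw [Measure.addHaar_ball volume (0:E2) hn0R.le, finrank_euclideanSpace_fin,
                ENNReal.toReal_mul, ENNReal.toReal_ofReal (by positivity)]
      calc Real.sqrt (∫ t, (∫ x in ball (0:E2) (n:ℝ),
            (P t x - ⨍ y in ball (0:E2) (n:ℝ), P t y) ^ 2) ∂μ)
          ≤ Real.sqrt ((n:ℝ)^2 * K) := Real.sqrt_le_sqrt hIn_le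
        _ = (n:ℝ) * Real.sqrt K := by
            rw [Real.sqrt_mul (sq_nonneg _), Real.sqrt_sq hn0R.le]
  refine ⟨⟨M, hM0, fun n hn => (key n hn).1⟩, ?_⟩
  -- the tendsto part
  have hJm : ∀ n : ℕ, AEMeasurable
      (fun t => ∫⁻ x in {x : E2 | (n:ℝ)/2 < ‖x‖ ∧ ‖x‖ < (n:ℝ)},
        (‖u t x‖₊ : ℝ≥0∞) * ‖u t x‖₊) μ := by
    intro n
    refine ⟨fun t => ∫⁻ x in {x : E2 | (n:ℝ)/2 < ‖x‖ ∧ ‖x‖ < (n:ℝ)},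
      (‖u' (t, x)‖₊ : ℝ≥0∞) * ‖u' (t, x)‖₊, ?_, ?_⟩
    · exact Measurable.lintegral_prod_right'
        ((hu'm.measurable.nnnorm.coe_nnreal_ennreal).mul
          hu'm.measurable.nnnorm.coe_nnreal_ennreal)
    · filter_upwards [Measure.ae_ae_of_ae_prod hu'e] with t ht
      refine lintegral_congr_ae (ae_restrict_of_ae ?_)
      filter_upwards [ht] with x hx
      rw [hx]
  have hJfin : ∀ᵐ t ∂μ, ∀ n : ℕ, (∫⁻ x in {x : E2 | (n:ℝ)/2 < ‖x‖ ∧ ‖x‖ < (n:ℝ)},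
      (‖u t x‖₊ : ℝ≥0∞) * ‖u t x‖₊) < ⊤ := by
    filter_upwards [hufin] with t ht
    intro n
    exact lt_of_le_of_lt (setLIntegral_le_lintegral _ _) ht
  have hJf_eq : ∀ n : ℕ, (∫ t, (∫ x in {x : E2 | (n:ℝ)/2 < ‖x‖ ∧ ‖x‖ < (n:ℝ)},
        ‖u t x‖ ^ 2) ∂μ)
      = (∫⁻ t, (∫⁻ x in {x : E2 | (n:ℝ)/2 < ‖x‖ ∧ ‖x‖ < (n:ℝ)},
        (‖u t x‖₊ : ℝ≥0∞) * ‖u t x‖₊) ∂μ).toReal := by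
    intro n
    rw [← integral_toReal (hJm n) (hJfin.mono fun t ht => ht n)]
    apply integral_congr_ae
    filter_upwards [hae_u] with t hum
    rw [integral_eq_lintegral_of_nonneg_ae (Eventually.of_forall fun x => sq_nonneg _)
      ((hum.norm.aemeasurable.pow_const 2).aestronglyMeasurable.restrict)]
    congr 1
    apply lintegral_congr
    intro x
    rw [show ‖u t x‖ ^ 2 = ‖u t x‖ * ‖u t x‖ from pow_two _,
      ENNReal.ofReal_mul (norm_nonneg _), ofReal_norm, enorm_eq_nnnorm]
  have hUm : AEMeasurable (fun q : ℝ × E2 => (‖u q.1 q.2‖₊ : ℝ≥0∞) * ‖u q.1 q.2‖₊)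
      (μ.prod volume) := humeas'.enorm.mul humeas'.enorm
  have hUfin : (∫⁻ q, (‖u q.1 q.2‖₊ : ℝ≥0∞) * ‖u q.1 q.2‖₊ ∂(μ.prod volume)) ≠ ⊤ := by
    rw [lintegral_prod _ hUm]
    exact huL2'.ne
  have hFn_eq : ∀ n : ℕ, (∫⁻ q, (Set.univ ×ˢ {x : E2 | (n:ℝ)/2 < ‖x‖ ∧ ‖x‖ < (n:ℝ)}).indicator
        (fun q : ℝ × E2 => (‖u q.1 q.2‖₊ : ℝ≥0∞) * ‖u q.1 q.2‖₊) q ∂(μ.prod volume))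
      = ∫⁻ t, (∫⁻ x in {x : E2 | (n:ℝ)/2 < ‖x‖ ∧ ‖x‖ < (n:ℝ)},
        (‖u t x‖₊ : ℝ≥0∞) * ‖u t x‖₊) ∂μ := by
    intro n
    have hres : (μ.prod volume).restrict
        (Set.univ ×ˢ {x : E2 | (n:ℝ)/2 < ‖x‖ ∧ ‖x‖ < (n:ℝ)})
        = μ.prod (volume.restrict {x : E2 | (n:ℝ)/2 < ‖x‖ ∧ ‖x‖ < (n:ℝ)}) := by
      rw [← Measure.prod_restrict, Measure.restrict_univ]
    have hUm' : AEMeasurable (fun q : ℝ × E2 => (‖u q.1 q.2‖₊ : ℝ≥0∞) * ‖u q.1 q.2‖₊)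
        (μ.prod (volume.restrict {x : E2 | (n:ℝ)/2 < ‖x‖ ∧ ‖x‖ < (n:ℝ)})) := by
      rw [← hres]; exact hUm.restrict
    rw [lintegral_indicator (MeasurableSet.univ.prod (hA_meas n)), hres,
      lintegral_prod _ hUm']
  have htendL : Tendsto (fun n : ℕ => ∫⁻ t, (∫⁻ x in {x : E2 | (n:ℝ)/2 < ‖x‖ ∧ ‖x‖ < (n:ℝ)},
      (‖u t x‖₊ : ℝ≥0∞) * ‖u t x‖₊) ∂μ) atTop (𝓝 0) := by
    rw [show (fun n : ℕ => ∫⁻ t, (∫⁻ x in {x : E2 | (n:ℝ)/2 < ‖x‖ ∧ ‖x‖ < (n:ℝ)},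
        (‖u t x‖₊ : ℝ≥0∞) * ‖u t x‖₊) ∂μ)
      = fun n : ℕ => ∫⁻ q, (Set.univ ×ˢ {x : E2 | (n:ℝ)/2 < ‖x‖ ∧ ‖x‖ < (n:ℝ)}).indicator
        (fun q : ℝ × E2 => (‖u q.1 q.2‖₊ : ℝ≥0∞) * ‖u q.1 q.2‖₊) q ∂(μ.prod volume) from
      funext fun n => (hFn_eq n).symm]
    have hdom := tendsto_lintegral_of_dominated_convergence' (μ := μ.prod volume)
      (F := fun (n : ℕ) (q : ℝ × E2) =>
        (Set.univ ×ˢ {x : E2 | (n:ℝ)/2 < ‖x‖ ∧ ‖x‖ < (n:ℝ)}).indicator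
          (fun q : ℝ × E2 => (‖u q.1 q.2‖₊ : ℝ≥0∞) * ‖u q.1 q.2‖₊) q)
      (f := fun _ => 0) (fun q : ℝ × E2 => (‖u q.1 q.2‖₊ : ℝ≥0∞) * ‖u q.1 q.2‖₊)
      (fun n => hUm.indicator (MeasurableSet.univ.prod (hA_meas n)))
      (fun n => Eventually.of_forall fun q => Set.indicator_le_self _ _ q)
      hUfin ?_
    · simpa using hdom
    · refine Eventually.of_forall fun q => ?_
      have hev : ∀ᶠ m : ℕ in atTop,
          (Set.univ ×ˢ {x : E2 | (m:ℝ)/2 < ‖x‖ ∧ ‖x‖ < (m:ℝ)}).indicator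
            (fun q : ℝ × E2 => (‖u q.1 q.2‖₊ : ℝ≥0∞) * ‖u q.1 q.2‖₊) q = 0 := by
        filter_upwards [eventually_ge_atTop (⌈2 * ‖q.2‖⌉₊ + 1)] with m hm
        apply Set.indicator_of_notMem
        intro hqmem
        have h1 : (m:ℝ)/2 < ‖q.2‖ := hqmem.2.1
        have h2 : 2 * ‖q.2‖ ≤ (m:ℝ) := by
          have hle := Nat.le_ceil (2 * ‖q.2‖)
          have hm' : ((⌈2 * ‖q.2‖⌉₊ + 1 : ℕ) : ℝ) ≤ (m:ℝ) := by exact_mod_cast hm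
          push_cast at hm'
          linarith
        linarith
      exact Tendsto.congr' (hev.mono fun m h => h.symm) tendsto_const_nhds
  have hJtend : Tendsto (fun n : ℕ => ∫ t, (∫ x in {x : E2 | (n:ℝ)/2 < ‖x‖ ∧ ‖x‖ < (n:ℝ)},
      ‖u t x‖ ^ 2) ∂μ) atTop (𝓝 0) := by
    rw [show (fun n : ℕ => ∫ t, (∫ x in {x : E2 | (n:ℝ)/2 < ‖x‖ ∧ ‖x‖ < (n:ℝ)},
        ‖u t x‖ ^ 2) ∂μ)
      = fun n : ℕ => (∫⁻ t, (∫⁻ x in {x : E2 | (n:ℝ)/2 < ‖x‖ ∧ ‖x‖ < (n:ℝ)},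
        (‖u t x‖₊ : ℝ≥0∞) * ‖u t x‖₊) ∂μ).toReal from funext hJf_eq]
    have hcomp := (ENNReal.tendsto_toReal (a := 0) (by simp)).comp htendL
    exact hcomp
  have hsqJ : Tendsto (fun n : ℕ => Real.sqrt (∫ t,
      (∫ x in {x : E2 | (n:ℝ)/2 < ‖x‖ ∧ ‖x‖ < (n:ℝ)}, ‖u t x‖ ^ 2) ∂μ)) atTop (𝓝 0) := by
    have hcomp := (Real.continuous_sqrt.tendsto 0).comp hJtend
    rw [Real.sqrt_zero] at hcomp
    exact hcomp
  rw [tendsto_zero_iff_abs_tendsto_zero]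
  refine squeeze_zero' (g := fun n : ℕ => M * Real.sqrt K *
      Real.sqrt (∫ t, (∫ x in {x : E2 | (n:ℝ)/2 < ‖x‖ ∧ ‖x‖ < (n:ℝ)}, ‖u t x‖ ^ 2) ∂μ))
    (Eventually.of_forall fun n => abs_nonneg _) ?_ ?_
  · filter_upwards [eventually_ge_atTop 1] with n hn
    have hn0R : (0:ℝ) < n := by exact_mod_cast hn
    calc |∫ t, (∫ x, P t x * ⟪u t x, gradient (fun z => φ ((n:ℝ)⁻¹ • z)) x⟫) ∂μ|
        ≤ (M / n) *
          Real.sqrt (∫ t, (∫ x in ball (0:E2) (n:ℝ),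
            (P t x - ⨍ y in ball (0:E2) (n:ℝ), P t y) ^ 2) ∂μ) *
          Real.sqrt (∫ t, (∫ x in {x : E2 | (n:ℝ)/2 < ‖x‖ ∧ ‖x‖ < (n:ℝ)},
            ‖u t x‖ ^ 2) ∂μ) := (key n hn).1
      _ ≤ (M / n) * ((n:ℝ) * Real.sqrt K) *
          Real.sqrt (∫ t, (∫ x in {x : E2 | (n:ℝ)/2 < ‖x‖ ∧ ‖x‖ < (n:ℝ)},
            ‖u t x‖ ^ 2) ∂μ) :=
          mul_le_mul_of_nonneg_right
            (mul_le_mul_of_nonneg_left (key n hn).2 (by positivity))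
            (Real.sqrt_nonneg _)
      _ = M * Real.sqrt K *
          Real.sqrt (∫ t, (∫ x in {x : E2 | (n:ℝ)/2 < ‖x‖ ∧ ‖x‖ < (n:ℝ)},
            ‖u t x‖ ^ 2) ∂μ) := by
          field_simp
  · have hcm := hsqJ.const_mul (M * Real.sqrt K)
    simpa [mul_assoc] using hcm
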